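/- The map T ↦ M(T) from rooted planar ternary trees with n internal vertices to perfect matchings of {0,1,...,2n+1} is injective: two ternary trees with the same number of leaves having equal Jones matchings are equal. -/

import Mathlib

inductive TernaryTree : Type
  | leaf : TernaryTree
  | node : TernaryTree → TernaryTree → TernaryTree → TernaryTree

namespace TernaryTree

/-- number of leaves -/
def numLeaves : TernaryTree → ℕ
  | leaf => 1
  | node a b c => a.numLeaves + b.numLeaves + c.numLeaves

/-- number of internal (3-ary branching) vertices -/
def numInternal : TernaryTree → ℕ
  | leaf => 0
  | node a b c => a.numInternal + b.numInternal + c.numInternal + 1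

/-- the distinguished leaf `f` of a tree whose leaves are labelled `o+1, …, o + numLeaves` -/
def distLeaf : ℕ → TernaryTree → ℕ
  | o, leaf => o + 1
  | o, node a b _ => distLeaf (o + a.numLeaves) b

/-- the matching `M'` of a tree whose leaves are labelled `o+1, …, o + numLeaves` -/
def matchAux : ℕ → TernaryTree → Finset (Finset ℕ)
  | _, leaf => ∅
  | o, node a b c =>
      matchAux o a ∪ matchAux (o + a.numLeaves) b ∪
        matchAux (o + a.numLeaves + b.numLeaves) c ∪
        {({distLeaf o a, distLeaf (o + a.numLeaves + b.numLeaves) c} : Finset ℕ)}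

/-- the Jones matching `M(T) = M'(T) ∪ {{0, f(T)}}` -/
def jonesMatching (T : TernaryTree) : Finset (Finset ℕ) :=
  matchAux 0 T ∪ {({0, distLeaf 0 T} : Finset ℕ)}

lemma numLeaves_pos (T : TernaryTree) : 0 < T.numLeaves := by
  induction T with
  | leaf => simp [numLeaves]
  | node a b c iha ihb ihc => simp only [numLeaves]; omega

lemma distLeaf_gt : ∀ (T : TernaryTree) (o : ℕ), o < distLeaf o T
  | leaf, o => by simp [distLeaf]
  | node a b c, o => by
    have h := distLeaf_gt b (o + a.numLeaves)
    simp only [distLeaf]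
    omega

lemma distLeaf_le : ∀ (T : TernaryTree) (o : ℕ), distLeaf o T ≤ o + T.numLeaves
  | leaf, o => by simp [distLeaf, numLeaves]
  | node a b c, o => by
    have h := distLeaf_le b (o + a.numLeaves)
    simp only [distLeaf, numLeaves]
    omega

lemma mem_matchAux_node {a b c : TernaryTree} {o : ℕ} {p : Finset ℕ} :
    p ∈ matchAux o (node a b c) ↔
      p ∈ matchAux o a ∨ p ∈ matchAux (o + a.numLeaves) b ∨
      p ∈ matchAux (o + a.numLeaves + b.numLeaves) c ∨
      p = {distLeaf o a, distLeaf (o + a.numLeaves + b.numLeaves) c} := by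
  simp [matchAux, Finset.mem_union, or_assoc]
  tauto

lemma mem_matchAux_bounds : ∀ (T : TernaryTree) (o : ℕ) (p : Finset ℕ),
    p ∈ matchAux o T → ∀ z ∈ p, o < z ∧ z ≤ o + T.numLeaves
  | leaf, o, p => by simp [matchAux]
  | node a b c, o, p => by
    intro hp z hz
    have hla := numLeaves_pos a
    have hlb := numLeaves_pos b
    have hlc := numLeaves_pos c
    simp only [numLeaves]
    rcases mem_matchAux_node.1 hp with h | h | h | h
    · have := mem_matchAux_bounds a o p h z hz; omega
    · have := mem_matchAux_bounds b (o + a.numLeaves) p h z hz; omega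
    · have := mem_matchAux_bounds c (o + a.numLeaves + b.numLeaves) p h z hz; omega
    · subst h
      have h1 := distLeaf_gt a o
      have h2 := distLeaf_le a o
      have h3 := distLeaf_gt c (o + a.numLeaves + b.numLeaves)
      have h4 := distLeaf_le c (o + a.numLeaves + b.numLeaves)
      rcases Finset.mem_insert.1 hz with h | h
      · omega
      · rcases Finset.mem_singleton.1 h with rfl
        omega

lemma matchAux_nonempty : ∀ (T : TernaryTree) (o : ℕ) (p : Finset ℕ),
    p ∈ matchAux o T → p.Nonempty
  | leaf, o, p => by simp [matchAux]
  | node a b c, o, p => by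
    intro hp
    rcases mem_matchAux_node.1 hp with h | h | h | h
    · exact matchAux_nonempty a o p h
    · exact matchAux_nonempty b (o + a.numLeaves) p h
    · exact matchAux_nonempty c (o + a.numLeaves + b.numLeaves) p h
    · subst h; exact ⟨distLeaf o a, Finset.mem_insert_self _ _⟩

/-- every position between the distinguished leaf (incl.) and the right end (excl.)
is crossed by some pair of the matching -/
lemma exists_cross : ∀ (T : TernaryTree) (o m : ℕ),
    distLeaf o T ≤ m → m < o + T.numLeaves →
    ∃ p ∈ matchAux o T, ∃ x ∈ p, ∃ y ∈ p, x ≤ m ∧ m < y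
  | leaf, o, m => by
    intro h1 h2
    simp [distLeaf, numLeaves] at h1 h2
    omega
  | node a b c, o, m => by
    intro h1 h2
    simp only [distLeaf] at h1
    simp only [numLeaves] at h2
    by_cases hb : m < o + a.numLeaves + b.numLeaves
    · obtain ⟨p, hp, hx⟩ := exists_cross b (o + a.numLeaves) m h1 (by omega)
      exact ⟨p, mem_matchAux_node.2 (Or.inr (Or.inl hp)), hx⟩
    · push_neg at hb
      by_cases hc : m < distLeaf (o + a.numLeaves + b.numLeaves) c
      · refine ⟨{distLeaf o a, distLeaf (o + a.numLeaves + b.numLeaves) c},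
          mem_matchAux_node.2 (Or.inr (Or.inr (Or.inr rfl))), distLeaf o a, ?_,
          distLeaf (o + a.numLeaves + b.numLeaves) c, ?_, ?_, hc⟩
        · exact Finset.mem_insert_self _ _
        · exact Finset.mem_insert_of_mem (Finset.mem_singleton_self _)
        · have := distLeaf_le a o; omega
      · push_neg at hc
        obtain ⟨p, hp, hx⟩ := exists_cross c (o + a.numLeaves + b.numLeaves) m hc (by omega)
        exact ⟨p, mem_matchAux_node.2 (Or.inr (Or.inr (Or.inl hp))), hx⟩

/-- any pair straddling the distinguished leaf is either the top pair, or lies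
strictly to the right of the left endpoint of the top pair -/
lemma straddle_eq (a b c : TernaryTree) (o : ℕ) (q : Finset ℕ)
    (hq : q ∈ matchAux o (node a b c))
    (x : ℕ) (hx : x ∈ q) (hxf : x < distLeaf o (node a b c))
    (y : ℕ) (hy : y ∈ q) (hfy : distLeaf o (node a b c) < y) :
    q = {distLeaf o a, distLeaf (o + a.numLeaves + b.numLeaves) c} ∨
      ∀ z ∈ q, distLeaf o a < z := by
  have hfb1 := distLeaf_gt b (o + a.numLeaves)
  have hfb2 := distLeaf_le b (o + a.numLeaves)
  have hfa2 := distLeaf_le a o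
  simp only [distLeaf] at hxf hfy
  rcases mem_matchAux_node.1 hq with h | h | h | h
  · exfalso
    have := mem_matchAux_bounds a o q h y hy
    omega
  · right
    intro z hz
    have := mem_matchAux_bounds b (o + a.numLeaves) q h z hz
    omega
  · exfalso
    have := mem_matchAux_bounds c (o + a.numLeaves + b.numLeaves) q h x hx
    omega
  · exact Or.inl h

/-- the top pair is determined by the matching and the distinguished leaf -/
lemma top_pair_eq (a₁ b₁ c₁ a₂ b₂ c₂ : TernaryTree) (o : ℕ)
    (hS : matchAux o (node a₁ b₁ c₁) = matchAux o (node a₂ b₂ c₂))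
    (hf : distLeaf o (node a₁ b₁ c₁) = distLeaf o (node a₂ b₂ c₂)) :
    ({distLeaf o a₁, distLeaf (o + a₁.numLeaves + b₁.numLeaves) c₁} : Finset ℕ) =
      {distLeaf o a₂, distLeaf (o + a₂.numLeaves + b₂.numLeaves) c₂} := by
  set fa₁ := distLeaf o a₁ with hfa₁
  set fc₁ := distLeaf (o + a₁.numLeaves + b₁.numLeaves) c₁ with hfc₁
  set fa₂ := distLeaf o a₂ with hfa₂
  set fc₂ := distLeaf (o + a₂.numLeaves + b₂.numLeaves) c₂ with hfc₂
  have ha₁ : fa₁ ≤ o + a₁.numLeaves := distLeaf_le a₁ o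
  have ha₂ : fa₂ ≤ o + a₂.numLeaves := distLeaf_le a₂ o
  have hc₁ : o + a₁.numLeaves + b₁.numLeaves < fc₁ := distLeaf_gt c₁ _
  have hc₂ : o + a₂.numLeaves + b₂.numLeaves < fc₂ := distLeaf_gt c₂ _
  have hb₁1 : o + a₁.numLeaves < distLeaf o (node a₁ b₁ c₁) := by
    simp only [distLeaf]; exact distLeaf_gt b₁ _
  have hb₁2 : distLeaf o (node a₁ b₁ c₁) ≤ o + a₁.numLeaves + b₁.numLeaves := by
    simp only [distLeaf]; exact distLeaf_le b₁ _
  have hb₂1 : o + a₂.numLeaves < distLeaf o (node a₂ b₂ c₂) := by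
    simp only [distLeaf]; exact distLeaf_gt b₂ _
  have hb₂2 : distLeaf o (node a₂ b₂ c₂) ≤ o + a₂.numLeaves + b₂.numLeaves := by
    simp only [distLeaf]; exact distLeaf_le b₂ _
  have hmem1 : ({fa₁, fc₁} : Finset ℕ) ∈ matchAux o (node a₂ b₂ c₂) := by
    rw [← hS]; exact mem_matchAux_node.2 (Or.inr (Or.inr (Or.inr rfl)))
  have hmem2 : ({fa₂, fc₂} : Finset ℕ) ∈ matchAux o (node a₁ b₁ c₁) := by
    rw [hS]; exact mem_matchAux_node.2 (Or.inr (Or.inr (Or.inr rfl)))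
  have h1 := straddle_eq a₂ b₂ c₂ o _ hmem1 fa₁ (Finset.mem_insert_self _ _)
    (by rw [← hf]; omega) fc₁ (Finset.mem_insert_of_mem (Finset.mem_singleton_self _))
    (by rw [← hf]; omega)
  have h2 := straddle_eq a₁ b₁ c₁ o _ hmem2 fa₂ (Finset.mem_insert_self _ _)
    (by rw [hf]; omega) fc₂ (Finset.mem_insert_of_mem (Finset.mem_singleton_self _))
    (by rw [hf]; omega)
  rcases h1 with h1 | h1
  · exact h1
  · rcases h2 with h2 | h2
    · exact h2.symm
    · exfalso
      have e1 := h1 fa₁ (Finset.mem_insert_self _ _)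
      have e2 := h2 fa₂ (Finset.mem_insert_self _ _)
      omega

/-- recovering the size of the left subtree -/
lemma la_le (a₁ b₁ c₁ a₂ b₂ c₂ : TernaryTree) (o : ℕ)
    (hS : matchAux o (node a₁ b₁ c₁) = matchAux o (node a₂ b₂ c₂))
    (hfa : distLeaf o a₂ ≤ o + a₁.numLeaves)
    (hfc : o + a₂.numLeaves < distLeaf (o + a₁.numLeaves + b₁.numLeaves) c₁) :
    a₂.numLeaves ≤ a₁.numLeaves := by
  by_contra hlt
  push_neg at hlt
  obtain ⟨q, hq, x, hxq, y, hyq, hxm, hmy⟩ :=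
    exists_cross a₂ o (o + a₁.numLeaves) hfa (by omega)
  have hqb := mem_matchAux_bounds a₂ o q hq
  have hq' : q ∈ matchAux o (node a₁ b₁ c₁) := by
    rw [hS]; exact mem_matchAux_node.2 (Or.inl hq)
  rcases mem_matchAux_node.1 hq' with h | h | h | h
  · have := mem_matchAux_bounds a₁ o q h y hyq
    omega
  · have := mem_matchAux_bounds b₁ (o + a₁.numLeaves) q h x hxq
    omega
  · have := mem_matchAux_bounds c₁ (o + a₁.numLeaves + b₁.numLeaves) q h x hxq
    have := numLeaves_pos b₁
    omega
  · have : distLeaf (o + a₁.numLeaves + b₁.numLeaves) c₁ ∈ q := by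
      rw [h]; exact Finset.mem_insert_of_mem (Finset.mem_singleton_self _)
    have := hqb _ this
    omega

/-- recovering the size of the middle subtree -/
lemma lb_le (a₁ b₁ c₁ a₂ b₂ c₂ : TernaryTree) (o : ℕ)
    (hS : matchAux o (node a₁ b₁ c₁) = matchAux o (node a₂ b₂ c₂))
    (hla : a₁.numLeaves = a₂.numLeaves)
    (hf : distLeaf o (node a₁ b₁ c₁) = distLeaf o (node a₂ b₂ c₂)) :
    b₂.numLeaves ≤ b₁.numLeaves := by
  by_contra hlt
  push_neg at hlt
  have hf1 : distLeaf o (node a₁ b₁ c₁) ≤ o + a₁.numLeaves + b₁.numLeaves := by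
    simp only [distLeaf]; exact distLeaf_le b₁ _
  have hf2 : distLeaf o (node a₂ b₂ c₂) = distLeaf (o + a₂.numLeaves) b₂ := rfl
  obtain ⟨q, hq, x, hxq, y, hyq, hxm, hmy⟩ :=
    exists_cross b₂ (o + a₂.numLeaves) (o + a₁.numLeaves + b₁.numLeaves)
      (by rw [← hf2, ← hf]; exact hf1) (by omega)
  have hqb := mem_matchAux_bounds b₂ (o + a₂.numLeaves) q hq
  have hq' : q ∈ matchAux o (node a₁ b₁ c₁) := by
    rw [hS]; exact mem_matchAux_node.2 (Or.inr (Or.inl hq))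
  rcases mem_matchAux_node.1 hq' with h | h | h | h
  · have := mem_matchAux_bounds a₁ o q h y hyq
    omega
  · have := mem_matchAux_bounds b₁ (o + a₁.numLeaves) q h y hyq
    omega
  · have := mem_matchAux_bounds c₁ (o + a₁.numLeaves + b₁.numLeaves) q h x hxq
    omega
  · have hmem : distLeaf o a₁ ∈ q := by
      rw [h]; exact Finset.mem_insert_self _ _
    have h1 := hqb _ hmem
    have h2 := distLeaf_le a₁ o
    omega

lemma matchAux_filter_a (a b c : TernaryTree) (o : ℕ) :
    matchAux o a =
      (matchAux o (node a b c)).filter (fun p => ∀ z ∈ p, z ≤ o + a.numLeaves) := by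
  ext p
  simp only [Finset.mem_filter, mem_matchAux_node]
  constructor
  · intro hp
    exact ⟨Or.inl hp, fun z hz => (mem_matchAux_bounds a o p hp z hz).2⟩
  · rintro ⟨h | h | h | h, hb⟩
    · exact h
    · obtain ⟨z, hz⟩ := matchAux_nonempty b _ p h
      have := mem_matchAux_bounds b _ p h z hz
      have := hb z hz
      omega
    · obtain ⟨z, hz⟩ := matchAux_nonempty c _ p h
      have := mem_matchAux_bounds c _ p h z hz
      have := numLeaves_pos b
      have := hb z hz
      omega
    · exfalso
      have hmem : distLeaf (o + a.numLeaves + b.numLeaves) c ∈ p := by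
        rw [h]; exact Finset.mem_insert_of_mem (Finset.mem_singleton_self _)
      have h1 := hb _ hmem
      have h2 := distLeaf_gt c (o + a.numLeaves + b.numLeaves)
      have := numLeaves_pos b
      omega

lemma matchAux_filter_b (a b c : TernaryTree) (o : ℕ) :
    matchAux (o + a.numLeaves) b =
      (matchAux o (node a b c)).filter
        (fun p => ∀ z ∈ p, o + a.numLeaves < z ∧ z ≤ o + a.numLeaves + b.numLeaves) := by
  ext p
  simp only [Finset.mem_filter, mem_matchAux_node]
  constructor
  · intro hp
    exact ⟨Or.inr (Or.inl hp), fun z hz => mem_matchAux_bounds b _ p hp z hz⟩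
  · rintro ⟨h | h | h | h, hb⟩
    · obtain ⟨z, hz⟩ := matchAux_nonempty a _ p h
      have := mem_matchAux_bounds a _ p h z hz
      have := (hb z hz).1
      omega
    · exact h
    · obtain ⟨z, hz⟩ := matchAux_nonempty c _ p h
      have := mem_matchAux_bounds c _ p h z hz
      have := (hb z hz).2
      omega
    · exfalso
      have hmem : distLeaf o a ∈ p := by
        rw [h]; exact Finset.mem_insert_self _ _
      have h1 := (hb _ hmem).1
      have h2 := distLeaf_le a o
      omega

lemma matchAux_filter_c (a b c : TernaryTree) (o : ℕ) :
    matchAux (o + a.numLeaves + b.numLeaves) c =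
      (matchAux o (node a b c)).filter
        (fun p => ∀ z ∈ p, o + a.numLeaves + b.numLeaves < z) := by
  ext p
  simp only [Finset.mem_filter, mem_matchAux_node]
  constructor
  · intro hp
    exact ⟨Or.inr (Or.inr (Or.inl hp)),
      fun z hz => (mem_matchAux_bounds c _ p hp z hz).1⟩
  · rintro ⟨h | h | h | h, hb⟩
    · obtain ⟨z, hz⟩ := matchAux_nonempty a _ p h
      have := mem_matchAux_bounds a _ p h z hz
      have := hb z hz
      have := numLeaves_pos b
      omega
    · obtain ⟨z, hz⟩ := matchAux_nonempty b _ p h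
      have := mem_matchAux_bounds b _ p h z hz
      have := hb z hz
      omega
    · exact h
    · exfalso
      have hmem : distLeaf o a ∈ p := by
        rw [h]; exact Finset.mem_insert_self _ _
      have h1 := hb _ hmem
      have h2 := distLeaf_le a o
      have := numLeaves_pos b
      omega

lemma key : ∀ (T₁ T₂ : TernaryTree) (o : ℕ),
    T₁.numLeaves = T₂.numLeaves →
    matchAux o T₁ = matchAux o T₂ →
    distLeaf o T₁ = distLeaf o T₂ → T₁ = T₂ := by
  intro T₁
  induction T₁ with
  | leaf =>
    intro T₂ o hn _ _
    cases T₂ with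
    | leaf => rfl
    | node a b c =>
      exfalso
      simp only [numLeaves] at hn
      have := numLeaves_pos a
      have := numLeaves_pos b
      have := numLeaves_pos c
      omega
  | node a₁ b₁ c₁ iha ihb ihc =>
    intro T₂ o hn hS hf
    cases T₂ with
    | leaf =>
      exfalso
      simp only [numLeaves] at hn
      have := numLeaves_pos a₁
      have := numLeaves_pos b₁
      have := numLeaves_pos c₁
      omega
    | node a₂ b₂ c₂ =>
      -- the top pairs are equal
      have htop := top_pair_eq a₁ b₁ c₁ a₂ b₂ c₂ o hS hf
      -- extract fa₁ = fa₂ and fc₁ = fc₂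
      have ha₁ : distLeaf o a₁ ≤ o + a₁.numLeaves := distLeaf_le a₁ o
      have ha₂ : distLeaf o a₂ ≤ o + a₂.numLeaves := distLeaf_le a₂ o
      have hc₁ : o + a₁.numLeaves + b₁.numLeaves <
          distLeaf (o + a₁.numLeaves + b₁.numLeaves) c₁ := distLeaf_gt c₁ _
      have hc₂ : o + a₂.numLeaves + b₂.numLeaves <
          distLeaf (o + a₂.numLeaves + b₂.numLeaves) c₂ := distLeaf_gt c₂ _
      have hfb₁ := distLeaf_gt b₁ (o + a₁.numLeaves)
      have hfb₂ := distLeaf_gt b₂ (o + a₂.numLeaves)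
      have hfb₁' := distLeaf_le b₁ (o + a₁.numLeaves)
      have hfb₂' := distLeaf_le b₂ (o + a₂.numLeaves)
      have hff : distLeaf (o + a₁.numLeaves) b₁ = distLeaf (o + a₂.numLeaves) b₂ := hf
      have hfa : distLeaf o a₁ = distLeaf o a₂ := by
        have h1 : distLeaf o a₁ ∈
            ({distLeaf o a₂, distLeaf (o + a₂.numLeaves + b₂.numLeaves) c₂} : Finset ℕ) := by
          rw [← htop]; exact Finset.mem_insert_self _ _
        rcases Finset.mem_insert.1 h1 with h | h
        · exact h
        · exfalso
          rw [Finset.mem_singleton] at h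
          omega
      have hfc : distLeaf (o + a₁.numLeaves + b₁.numLeaves) c₁ =
          distLeaf (o + a₂.numLeaves + b₂.numLeaves) c₂ := by
        have h1 : distLeaf (o + a₁.numLeaves + b₁.numLeaves) c₁ ∈
            ({distLeaf o a₂, distLeaf (o + a₂.numLeaves + b₂.numLeaves) c₂} : Finset ℕ) := by
          rw [← htop]; exact Finset.mem_insert_of_mem (Finset.mem_singleton_self _)
        rcases Finset.mem_insert.1 h1 with h | h
        · exfalso; omega
        · exact Finset.mem_singleton.1 h
      -- sizes of the subtrees agree
      have hla : a₁.numLeaves = a₂.numLeaves := by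
        have h1 := la_le a₁ b₁ c₁ a₂ b₂ c₂ o hS (by omega) (by omega)
        have h2 := la_le a₂ b₂ c₂ a₁ b₁ c₁ o hS.symm (by omega) (by omega)
        omega
      have hlb : b₁.numLeaves = b₂.numLeaves := by
        have h1 := lb_le a₁ b₁ c₁ a₂ b₂ c₂ o hS hla hf
        have h2 := lb_le a₂ b₂ c₂ a₁ b₁ c₁ o hS.symm hla.symm hf.symm
        omega
      have hlc : c₁.numLeaves = c₂.numLeaves := by
        simp only [numLeaves] at hn
        omega
      -- matchings of the subtrees agree
      have hSa : matchAux o a₁ = matchAux o a₂ := by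
        rw [matchAux_filter_a a₁ b₁ c₁ o, matchAux_filter_a a₂ b₂ c₂ o, hS, hla]
      have hSb : matchAux (o + a₁.numLeaves) b₁ = matchAux (o + a₂.numLeaves) b₂ := by
        rw [matchAux_filter_b a₁ b₁ c₁ o, matchAux_filter_b a₂ b₂ c₂ o, hS, hla, hlb]
      have hSc : matchAux (o + a₁.numLeaves + b₁.numLeaves) c₁ =
          matchAux (o + a₂.numLeaves + b₂.numLeaves) c₂ := by
        rw [matchAux_filter_c a₁ b₁ c₁ o, matchAux_filter_c a₂ b₂ c₂ o, hS, hla, hlb]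
      have ea : a₁ = a₂ := iha a₂ o hla hSa hfa
      have eb : b₁ = b₂ := by
        rw [hla] at hSb hff
        exact ihb b₂ (o + a₂.numLeaves) hlb hSb hff
      have ec : c₁ = c₂ := by
        rw [hla, hlb] at hSc hfc
        exact ihc c₂ (o + a₂.numLeaves + b₂.numLeaves) hlc hSc hfc
      rw [ea, eb, ec]

end TernaryTree

theorem jonesMatching_injective (T₁ T₂ : TernaryTree)
    (hleaves : T₁.numLeaves = T₂.numLeaves)
    (hmatch : T₁.jonesMatching = T₂.jonesMatching) : T₁ = T₂ := by
  open TernaryTree in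
  have hf : distLeaf 0 T₁ = distLeaf 0 T₂ := by
    have h1 : ({0, distLeaf 0 T₁} : Finset ℕ) ∈ T₂.jonesMatching := by
      rw [← hmatch]
      exact Finset.mem_union_right _ (Finset.mem_singleton_self _)
    rcases Finset.mem_union.1 h1 with h | h
    · exfalso
      have := mem_matchAux_bounds T₂ 0 _ h 0 (Finset.mem_insert_self _ _)
      omega
    · rw [Finset.mem_singleton] at h
      have h2 : distLeaf 0 T₁ ∈ ({0, distLeaf 0 T₂} : Finset ℕ) := by
        rw [← h]; exact Finset.mem_insert_of_mem (Finset.mem_singleton_self _)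
      have hg := distLeaf_gt T₁ 0
      rcases Finset.mem_insert.1 h2 with h' | h'
      · omega
      · exact Finset.mem_singleton.1 h'
  have hS : matchAux 0 T₁ = matchAux 0 T₂ := by
    ext p
    constructor
    · intro hp
      have hp' : p ∈ T₂.jonesMatching := by
        rw [← hmatch]; exact Finset.mem_union_left _ hp
      rcases Finset.mem_union.1 hp' with h | h
      · exact h
      · exfalso
        rw [Finset.mem_singleton] at h
        have h0 : (0 : ℕ) ∈ p := by rw [h]; exact Finset.mem_insert_self _ _
        have := mem_matchAux_bounds T₁ 0 p hp 0 h0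
        omega
    · intro hp
      have hp' : p ∈ T₁.jonesMatching := by
        rw [hmatch]; exact Finset.mem_union_left _ hp
      rcases Finset.mem_union.1 hp' with h | h
      · exact h
      · exfalso
        rw [Finset.mem_singleton] at h
        have h0 : (0 : ℕ) ∈ p := by rw [h]; exact Finset.mem_insert_self _ _
        have := mem_matchAux_bounds T₂ 0 p hp 0 h0
        omega
  exact TernaryTree.key T₁ T₂ 0 hleaves hS hf
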